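/- Let r ≥ 1 be an integer and suppose that A ⊆ G is a subset of the elementary abelian 2-group G of rank r with |A| > 2^(r-2) + 3. If a₁, a₂ ∈ A are adjacent in Γ(A), then deg(a₁) + deg(a₂) ≥ |A| + |D(A)| − 2^(r-1), where deg denotes the degree in Γ(A). -/
import Mathlib


open Pointwise

/-- `urep A` is the set `D(A)` of elements of the group having exactly one representation,
up to the order of summands, as a sum of two elements of `A`. -/
def urep {G : Type*} [AddCommGroup G] (A : Set G) : Set G :=
  {d | ∃ a₁ ∈ A, ∃ a₂ ∈ A, a₁ + a₂ = d ∧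
    ∀ b₁ ∈ A, ∀ b₂ ∈ A, b₁ + b₂ = d → (b₁ = a₁ ∧ b₂ = a₂) ∨ (b₁ = a₂ ∧ b₂ = a₁)}

/-- `gam A` is the unique representation graph `Γ(A)`: vertices are elements of `A`, and
distinct `a₁, a₂ ∈ A` are adjacent iff `a₁ + a₂ ∈ D(A)` (elements outside `A` are isolated). -/
def gam {G : Type*} [AddCommGroup G] (A : Set G) : SimpleGraph G :=
  SimpleGraph.fromRel (fun x y => x ∈ A ∧ y ∈ A ∧ x + y ∈ urep A)

namespace StmtAux

abbrev V (r : ℕ) : Type := Fin r → ZMod 2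

variable {r : ℕ}

lemma add_self (x : V r) : x + x = 0 := by
  funext i
  have h : ∀ a : ZMod 2, a + a = 0 := by decide
  exact h (x i)

lemma add_add_cancel (x y : V r) : x + y + y = x := by
  rw [add_assoc, add_self, add_zero]

lemma eq_of_add_eq_zero {x y : V r} (h : x + y = 0) : x = y := by
  have := congrArg (fun z => z + y) h
  simpa [add_add_cancel] using this

lemma shift_shift (x s t : V r) : x + s + (s + t) = x + t := by
  rw [add_assoc, ← add_assoc s s t, add_self, zero_add]

lemma mem_shift {A : Set (V r)} {w x : V r} :
    x ∈ (fun y => y + w) '' A ↔ x + w ∈ A := by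
  constructor
  · rintro ⟨y, hy, rfl⟩
    simpa [add_add_cancel] using hy
  · intro h
    exact ⟨x + w, h, add_add_cancel x w⟩

lemma card_univ : (Set.univ : Set (V r)).ncard = 2 ^ r := by
  rw [Set.ncard_univ, Nat.card_eq_fintype_card]; simp

lemma zero_not_urep {A : Set (V r)} {x y : V r} (hx : x ∈ A) (hy : y ∈ A)
    (hxy : x ≠ y) : (0 : V r) ∉ urep A := by
  rintro ⟨b, hb, c, hc, hbc, huniq⟩
  have hbceq : b = c := eq_of_add_eq_zero hbc
  have h1 := huniq x hx x hx (add_self x)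
  have h2 := huniq y hy y hy (add_self y)
  apply hxy
  rcases h1 with ⟨h1, -⟩ | ⟨h1, -⟩ <;> rcases h2 with ⟨h2, -⟩ | ⟨h2, -⟩ <;>
    simp [h1, h2, hbceq]

lemma ncard_S {A : Set (V r)} {w : V r} (hw : w ∈ urep A) (hw0 : w ≠ 0) :
    {x | x ∈ A ∧ x + w ∈ A}.ncard = 2 := by
  obtain ⟨b, hb, c, hc, hbc, huniq⟩ := hw
  have hbw : b + w = c := by rw [← hbc, ← add_assoc, add_self, zero_add]
  have hcw : c + w = b := by rw [← hbc, add_comm b c, ← add_assoc, add_self, zero_add]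
  have hset : {x | x ∈ A ∧ x + w ∈ A} = {b, c} := by
    ext x
    constructor
    · rintro ⟨hx, hxw⟩
      have hxx : x + (x + w) = w := by rw [← add_assoc, add_self, zero_add]
      rcases huniq x hx (x + w) hxw hxx with ⟨h1, -⟩ | ⟨h1, -⟩ <;> simp [h1]
    · rintro (rfl | rfl)
      · exact ⟨hb, hbw ▸ hc⟩
      · exact ⟨hc, hcw ▸ hb⟩
  rw [hset]
  refine Set.ncard_pair fun h => hw0 ?_
  rw [← hbc, h, add_self]

lemma no_three {A : Set (V r)} (hsize : 2 ^ r + 12 < 4 * A.ncard)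
    {d u : V r} (hd : d ∈ urep A) (hu : u ∈ urep A) (hv : u + d ∈ urep A)
    (hd0 : d ≠ 0) (hu0 : u ≠ 0) (hud : u ≠ d) : False := by
  set T : V r → Set (V r) := fun w => (fun y => y + w) '' A with hT
  have hcardT : ∀ w, (T w).ncard = A.ncard := fun w =>
    Set.ncard_image_of_injective _ (add_left_injective w)
  have hv0 : u + d ≠ 0 := fun h => hud (eq_of_add_eq_zero h)
  have hpair : ∀ s t : V r, s + t ∈ urep A → s + t ≠ 0 → (T s ∩ T t).ncard = 2 := by
    intro s t h1 h2
    have heq : T s ∩ T t = (fun y => y + s) '' {x | x ∈ A ∧ x + (s + t) ∈ A} := by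
      ext x
      simp only [hT, Set.mem_inter_iff, mem_shift, Set.mem_setOf_eq, shift_shift]
    rw [heq, Set.ncard_image_of_injective _ (add_left_injective s), ncard_S h1 h2]
  have e1 : d + (u + d) = u := by rw [add_comm u d, ← add_assoc, add_self, zero_add]
  have e2 : u + (u + d) = d := by rw [← add_assoc, add_self, zero_add]
  have i01 : (T 0 ∩ T d).ncard = 2 := hpair 0 d (by rwa [zero_add]) (by rwa [zero_add])
  have i02 : (T 0 ∩ T u).ncard = 2 := hpair 0 u (by rwa [zero_add]) (by rwa [zero_add])
  have i03 : (T 0 ∩ T (u + d)).ncard = 2 :=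
    hpair 0 (u + d) (by rwa [zero_add]) (by rwa [zero_add])
  have i12 : (T d ∩ T u).ncard = 2 := hpair d u (by rwa [add_comm]) (by rwa [add_comm])
  have i13 : (T d ∩ T (u + d)).ncard = 2 := hpair d (u + d) (by rwa [e1]) (by rwa [e1])
  have i23 : (T u ∩ T (u + d)).ncard = 2 := hpair u (u + d) (by rwa [e2]) (by rwa [e2])
  have f1 := Set.ncard_union_add_ncard_inter (T 0) (T d)
  have f2 := Set.ncard_union_add_ncard_inter (T 0 ∪ T d) (T u)
  have f3 := Set.ncard_union_add_ncard_inter (T 0 ∪ T d ∪ T u) (T (u + d))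
  have g2 : ((T 0 ∪ T d) ∩ T u).ncard ≤ 4 := by
    rw [Set.union_inter_distrib_right]
    have := Set.ncard_union_le (T 0 ∩ T u) (T d ∩ T u)
    omega
  have g3 : ((T 0 ∪ T d ∪ T u) ∩ T (u + d)).ncard ≤ 6 := by
    rw [Set.union_inter_distrib_right, Set.union_inter_distrib_right]
    have h1 := Set.ncard_union_le (T 0 ∩ T (u + d)) (T d ∩ T (u + d))
    have h2 := Set.ncard_union_le ((T 0 ∩ T (u + d)) ∪ (T d ∩ T (u + d))) (T u ∩ T (u + d))
    omega
  have gU : (T 0 ∪ T d ∪ T u ∪ T (u + d)).ncard ≤ 2 ^ r := by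
    have := Set.ncard_le_ncard (Set.subset_univ (T 0 ∪ T d ∪ T u ∪ T (u + d)))
      (Set.toFinite _)
    rwa [card_univ] at this
  rw [hcardT, hcardT] at f1
  rw [hcardT] at f2
  rw [hcardT] at f3
  omega

lemma mem_nb {A : Set (V r)} {a x : V r} (ha : a ∈ A) :
    x ∈ (gam A).neighborSet a ↔ x ≠ a ∧ x ∈ A ∧ x + a ∈ urep A := by
  simp only [SimpleGraph.mem_neighborSet, gam, SimpleGraph.fromRel_adj]
  constructor
  · rintro ⟨hne, h | h⟩
    · exact ⟨Ne.symm hne, h.2.1, by rw [add_comm]; exact h.2.2⟩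
    · exact ⟨Ne.symm hne, h.1, h.2.2⟩
  · rintro ⟨hne, hx, hxa⟩
    exact ⟨Ne.symm hne, Or.inr ⟨hx, ha, hxa⟩⟩

end StmtAux

open StmtAux in
/-- **Proposition (degree bound).** Let `r ≥ 1` and `A ⊆ G = Fin r → ZMod 2` with
`|A| > 2^(r-2) + 3` (stated as `4·|A| > 2^r + 12`). If `(a₁, a₂)` is an edge of `Γ(A)`,
then `deg(a₁) + deg(a₂) ≥ |A| + |D(A)| - 2^(r-1)`. -/
theorem stmt_8 (r : ℕ) (hr : 1 ≤ r) (A : Set (Fin r → ZMod 2))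
    (hsize : 2 ^ r + 12 < 4 * A.ncard)
    (a₁ a₂ : Fin r → ZMod 2) (hadj : (gam A).Adj a₁ a₂) :
    ((((gam A).neighborSet a₁).ncard : ℤ) + (((gam A).neighborSet a₂).ncard : ℤ)) ≥
      (A.ncard : ℤ) + ((urep A).ncard : ℤ) - 2 ^ (r - 1) := by
  classical
  have hadj' := hadj
  rw [gam, SimpleGraph.fromRel_adj] at hadj'
  obtain ⟨hne, hcase⟩ := hadj'
  have ha₁ : a₁ ∈ A := by rcases hcase with ⟨h, -, -⟩ | ⟨-, h, -⟩ <;> exact h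
  have ha₂ : a₂ ∈ A := by rcases hcase with ⟨-, h, -⟩ | ⟨h, -, -⟩ <;> exact h
  have hdD : a₁ + a₂ ∈ urep A := by
    rcases hcase with ⟨-, -, h⟩ | ⟨-, -, h⟩
    · exact h
    · rwa [add_comm]
  set d := a₁ + a₂ with hd_def
  have hd0 : d ≠ 0 := fun h => hne (eq_of_add_eq_zero h)
  have h0D : (0 : Fin r → ZMod 2) ∉ urep A := zero_not_urep ha₁ ha₂ hne
  have had₁ : a₁ + d = a₂ := by rw [hd_def, ← add_assoc, add_self, zero_add]
  have had₂ : a₂ + d = a₁ := by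
    rw [hd_def, add_comm a₁ a₂, ← add_assoc, add_self, zero_add]
  set D := urep A with hD
  set T : (Fin r → ZMod 2) → Set (Fin r → ZMod 2) :=
    fun w => (fun y => y + w) '' A with hT
  set E := T a₁ ∪ T a₂ with hE
  set nb₁ := (gam A).neighborSet a₁ with hnb₁
  set nb₂ := (gam A).neighborSet a₂ with hnb₂
  set N₁ := (fun y => y + a₁) '' nb₁ with hN₁
  set N₂ := (fun y => y + a₂) '' nb₂ with hN₂
  have hNc₁ : N₁.ncard = nb₁.ncard :=
    Set.ncard_image_of_injective _ (add_left_injective a₁)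
  have hNc₂ : N₂.ncard = nb₂.ncard :=
    Set.ncard_image_of_injective _ (add_left_injective a₂)
  -- N₁ ∪ N₂ = D ∩ E
  have hNE : N₁ ∪ N₂ = D ∩ E := by
    ext u
    constructor
    · rintro (⟨x, hx, rfl⟩ | ⟨x, hx, rfl⟩)
      · rw [hnb₁, mem_nb ha₁] at hx
        exact ⟨hx.2.2, Or.inl ⟨x, hx.2.1, rfl⟩⟩
      · rw [hnb₂, mem_nb ha₂] at hx
        exact ⟨hx.2.2, Or.inr ⟨x, hx.2.1, rfl⟩⟩
    · rintro ⟨huD, ⟨x, hx, rfl⟩ | ⟨x, hx, rfl⟩⟩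
      · left
        refine ⟨x, ?_, rfl⟩
        rw [hnb₁, mem_nb ha₁]
        refine ⟨?_, hx, huD⟩
        rintro rfl
        exact h0D (by simpa [add_self] using huD)
      · right
        refine ⟨x, ?_, rfl⟩
        rw [hnb₂, mem_nb ha₂]
        refine ⟨?_, hx, huD⟩
        rintro rfl
        exact h0D (by simpa [add_self] using huD)
  -- N₁ ∩ N₂ = {d}
  have hdN₁ : d ∈ N₁ := by
    refine ⟨a₂, ?_, by show a₂ + a₁ = d; rw [add_comm, hd_def]⟩
    rw [hnb₁, mem_nb ha₁]
    exact ⟨Ne.symm hne, ha₂, by rwa [add_comm]⟩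
  have hdN₂ : d ∈ N₂ := by
    refine ⟨a₁, ?_, by show a₁ + a₂ = d; rw [hd_def]⟩
    rw [hnb₂, mem_nb ha₂]
    exact ⟨hne, ha₁, hdD⟩
  have hN12 : N₁ ∩ N₂ = {d} := by
    apply Set.eq_singleton_iff_unique_mem.mpr
    refine ⟨⟨hdN₁, hdN₂⟩, ?_⟩
    rintro u ⟨⟨x, hx, rfl⟩, ⟨y, hy, hyu⟩⟩
    rw [hnb₁, mem_nb ha₁] at hx
    rw [hnb₂, mem_nb ha₂] at hy
    have hyu' : y + a₂ = x + a₁ := hyu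
    obtain ⟨c₁, hc₁, c₂, hc₂, hsum, huniq⟩ := hx.2.2
    have h1 := huniq x hx.2.1 a₁ ha₁ rfl
    have h2 := huniq y hy.2.1 a₂ ha₂ hyu'
    rcases h1 with ⟨hx1, ha1⟩ | ⟨hx1, ha1⟩ <;> rcases h2 with ⟨hy1, ha2⟩ | ⟨hy1, ha2⟩
    · exact absurd (ha1.trans ha2.symm) hne
    · show x + a₁ = d
      rw [hx1, ← ha2, add_comm, hd_def]
    · show x + a₁ = d
      have hya : y = a₁ := hy1.trans ha1.symm
      rw [← hyu', hya, hd_def]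
    · exact absurd (ha1.trans ha2.symm) hne
  -- T a₁ ∩ T a₂ = {0, d}
  have hTi : T a₁ ∩ T a₂ = ({0, d} : Set (Fin r → ZMod 2)) := by
    ext x
    simp only [hT, Set.mem_inter_iff, mem_shift, Set.mem_insert_iff,
      Set.mem_singleton_iff]
    constructor
    · rintro ⟨hx1, hx2⟩
      obtain ⟨c₁, hc₁, c₂, hc₂, hsum, huniq⟩ := hdD
      have h1 := huniq a₁ ha₁ a₂ ha₂ hd_def.symm
      have hxx : (x + a₁) + (x + a₂) = d := by
        rw [add_add_add_comm, add_self, zero_add, hd_def]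
      have h2 := huniq (x + a₁) hx1 (x + a₂) hx2 hxx
      have hx0 : x + a₁ = a₁ → x = 0 :=
        fun h => add_left_injective a₁ (h.trans (zero_add a₁).symm)
      have hxd : x + a₁ = a₂ → x = d := by
        intro h
        have hda : d + a₁ = a₂ := by rw [hd_def, add_comm a₁ a₂, add_add_cancel]
        exact add_left_injective a₁ (h.trans hda.symm)
      rcases h1 with ⟨e1, e2⟩ | ⟨e1, e2⟩ <;> rcases h2 with ⟨f1, f2⟩ | ⟨f1, f2⟩
      · exact Or.inl (hx0 (f1.trans e1.symm))
      · exact Or.inr (hxd (f1.trans e2.symm))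
      · exact Or.inr (hxd (f1.trans e2.symm))
      · exact Or.inl (hx0 (f1.trans e1.symm))
    · rintro (rfl | rfl)
      · constructor <;> simp [zero_add, ha₁, ha₂]
      · exact ⟨by rw [hd_def, add_comm a₁ a₂, add_add_cancel]; exact ha₂,
          by rw [hd_def, add_add_cancel]; exact ha₁⟩
  have hcT₁ : (T a₁).ncard = A.ncard :=
    Set.ncard_image_of_injective _ (add_left_injective a₁)
  have hcT₂ : (T a₂).ncard = A.ncard :=
    Set.ncard_image_of_injective _ (add_left_injective a₂)
  have hEcard : E.ncard + 2 = 2 * A.ncard := by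
    have h := Set.ncard_union_add_ncard_inter (T a₁) (T a₂)
    rw [hTi, Set.ncard_pair (Ne.symm hd0), hcT₁, hcT₂, ← hE] at h
    omega
  have h0E : (0 : Fin r → ZMod 2) ∈ E := Or.inl ⟨a₁, ha₁, add_self a₁⟩
  have hdE : d ∈ E := Or.inl ⟨a₂, ha₂, by show a₂ + a₁ = d; rw [add_comm, hd_def]⟩
  have hEinv : ∀ x, x ∈ E → x + d ∈ E := by
    rintro x (⟨y, hy, rfl⟩ | ⟨y, hy, rfl⟩)
    · exact Or.inr ⟨y, hy, by show y + a₂ = y + a₁ + d; rw [add_assoc, had₁]⟩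
    · exact Or.inl ⟨y, hy, by show y + a₁ = y + a₂ + d; rw [add_assoc, had₂]⟩
  have hkey : ∀ u, u ∈ D → u ∉ E → u + d ∉ D := by
    intro u huD huE hcontra
    have hu0 : u ≠ 0 := fun h => huE (h ▸ h0E)
    have hud : u ≠ d := fun h => huE (h ▸ hdE)
    exact no_three hsize hdD huD hcontra hd0 hu0 hud
  have hsig : (fun x => x + d) '' (D \ E) ⊆ Set.univ \ (E ∪ D) := by
    rintro - ⟨u, ⟨huD, huE⟩, rfl⟩
    refine ⟨trivial, ?_⟩
    rintro (h | h)
    · exact huE (by have h2 := hEinv _ h; simpa [add_add_cancel] using h2)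
    · exact hkey u huD huE h
  have hdisj1 : Disjoint (D \ E) ((fun x => x + d) '' (D \ E)) := by
    rw [Set.disjoint_left]
    rintro x ⟨hxD, hxE⟩ hximg
    exact (hsig hximg).2 (Or.inr hxD)
  have hdisj2 : Disjoint (D \ E ∪ (fun x => x + d) '' (D \ E)) E := by
    rw [Set.disjoint_left]
    rintro x (⟨-, hxE⟩ | hximg) hxE'
    · exact hxE hxE'
    · exact (hsig hximg).2 (Or.inl hxE')
  have himgcard : ((fun x => x + d) '' (D \ E)).ncard = (D \ E).ncard :=
    Set.ncard_image_of_injective _ (add_left_injective d)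
  have hcount : (D \ E).ncard + (D \ E).ncard + E.ncard ≤ 2 ^ r := by
    have h1 := Set.ncard_union_eq hdisj2
    have h2 := Set.ncard_union_eq hdisj1
    have h3 := Set.ncard_le_ncard
      (Set.subset_univ (D \ E ∪ (fun x => x + d) '' (D \ E) ∪ E)) (Set.toFinite _)
    rw [card_univ] at h3
    omega
  have hsplit := Set.ncard_inter_add_ncard_diff_eq_ncard D E
  have hNcard : (D ∩ E).ncard + 1 = nb₁.ncard + nb₂.ncard := by
    have h := Set.ncard_union_add_ncard_inter N₁ N₂
    rw [hN12, Set.ncard_singleton, hNc₁, hNc₂, hNE] at h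
    omega
  -- final arithmetic
  set p : ℕ := 2 ^ (r - 1) with hp_def
  have hp : 2 ^ r = 2 * p := by
    rw [hp_def, ← pow_succ']
    congr 1
    omega
  have hcast : ((2 : ℤ) ^ (r - 1)) = (p : ℤ) := by
    rw [hp_def]
    push_cast
    ring
  rw [hcast]
  omega
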